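/- arXiv:2404.06858 — 4 statements merged into one kernel-verified Lean document; each statement's English description precedes it below -/
import Mathlib

section
/- Let p be a prime and f ∈ ℤ[x] monic irreducible with K = ℚ[x]/(f) and 𝒪_K = ℤ[α] (α the class of x). If the reduction of f modulo p factors into distinct monic irreducible polynomials g̅_1, ..., g̅_r in 𝔽_p[x], then p𝒪_K = ∏_i (p, g_i(α)) is the factorization of p𝒪_K into distinct prime ideals, where g_i are monic lifts of g̅_i. -/
/-!
Reduction mod `p` is a surjection `ρ : ℤ[α] → 𝔽_p[X]/(f̄)` with kernel `pℤ[α]`, and `(p, g_i(α))`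
is the preimage of the ideal `(ḡ_i)`. Since `ḡ_i` is irreducible and divides `f̄`, that ideal is
prime; since the `ḡ_i` are distinct monic irreducibles, these ideals are pairwise comaximal. Hence
the product of their preimages is the preimage of their intersection `(∏ ḡ_i) = (f̄) = 0`, which
is `ker ρ = pℤ[α]`.
-/

open Polynomial Function

namespace Ideal

variable {A B : Type*} [CommRing A] [CommRing B] {ρ : A →+* B}

theorem span_pair_eq_comap_span_singleton (hρ : Surjective ρ) {x : A}
    (hker : RingHom.ker ρ = span {x}) (a : A) :
    span {x, a} = comap ρ (span {ρ a}) := by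
  rw [← Set.image_singleton, ← map_span, comap_map_of_surjective' ρ hρ, hker, ← span_union,
    Set.singleton_union, Set.pair_comm]

theorem _root_.IsCoprime.comap_of_surjective (hρ : Surjective ρ) {I J : Ideal B}
    (h : IsCoprime I J) : IsCoprime (comap ρ I) (comap ρ J) := by
  obtain ⟨i, hi, j, hj, hij⟩ := isCoprime_iff_exists.mp h
  obtain ⟨i', rfl⟩ := hρ i
  refine isCoprime_iff_exists.mpr ⟨i', hi, 1 - i', ?_, add_sub_cancel _ _⟩
  rwa [mem_comap, map_sub, map_one, ← hij, add_sub_cancel_left]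

theorem prod_comap_eq_ker_of_prod_eq_bot (hρ : Surjective ρ) {ι : Type*}
    {s : Finset ι} {J : ι → Ideal B} (hJ : (s : Set ι).Pairwise (IsCoprime on J))
    (hprod : ∏ i ∈ s, J i = ⊥) :
    ∏ i ∈ s, comap ρ (J i) = RingHom.ker ρ := by
  have hJ' : (s : Set ι).Pairwise (IsCoprime on fun i ↦ comap ρ (J i)) :=
    fun i hi j hj hij ↦ (hJ hi hj hij).comap_of_surjective hρ
  simp only [prod_eq_iInf_of_pairwise_isCoprime hJ', ← comap_iInf,
    ← prod_eq_iInf_of_pairwise_isCoprime hJ, hprod, RingHom.ker_eq_comap_bot]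

end Ideal

namespace AdjoinRoot

variable {R S : Type*} [CommRing R] [CommRing S] (φ : R →+* S) (f : R[X])

@[simp]
theorem map_mk {q : S[X]} (hq : q ∣ f.map φ) (h : R[X]) :
    map φ f q hq (mk f h) = mk q (h.map φ) := by
  rw [map, lift_mk, ← Polynomial.eval₂_map, ← aeval_eq, aeval_def, algebraMap_eq]

theorem map_surjective {φ : R →+* S} (hφ : Surjective φ) {q : S[X]} (hq : q ∣ f.map φ) :
    Surjective (map φ f q hq) := by
  intro y
  obtain ⟨h, rfl⟩ := mk_surjective y
  obtain ⟨h', rfl⟩ := Polynomial.map_surjective φ hφ h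
  exact ⟨mk f h', map_mk φ f hq h'⟩

theorem ker_map_self {φ : R →+* S} (hφ : Surjective φ) :
    RingHom.ker (map φ f (f.map φ) dvd_rfl) = (RingHom.ker φ).map (of f) := by
  refine le_antisymm (fun x hx ↦ ?_) (Ideal.map_le_iff_le_comap.mpr fun r hr ↦ ?_)
  · obtain ⟨h, rfl⟩ := mk_surjective x
    obtain ⟨c, hc⟩ := mk_eq_zero.mp ((map_mk φ f dvd_rfl h).symm.trans hx)
    obtain ⟨c', rfl⟩ := Polynomial.map_surjective φ hφ c
    have hred : h - f * c' ∈ (RingHom.ker φ).map C := by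
      rw [← ker_mapRingHom, RingHom.mem_ker, coe_mapRingHom, Polynomial.map_sub,
        Polynomial.map_mul, hc, sub_self]
    have := Ideal.mem_map_of_mem (mk f) hred
    rwa [Ideal.map_map, map_sub, map_mul, mk_self, zero_mul, sub_zero] at this
  · simp [RingHom.mem_ker.mp hr]

theorem isPrime_span_mk {q g : R[X]} (hg : Prime g) (hgq : g ∣ q) :
    (Ideal.span {mk q g}).IsPrime := by
  have := (Ideal.span_singleton_prime hg.ne_zero).mpr hg
  rw [← Set.image_singleton, ← Ideal.map_span]
  refine Ideal.map_isPrime_of_surjective mk_surjective ?_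
  exact fun x hx ↦ Ideal.span_singleton_le_span_singleton.mpr hgq <|
    Ideal.mem_span_singleton.mpr (mk_eq_zero.mp hx)

end AdjoinRoot

theorem Polynomial.isCoprime_of_monic_of_irreducible_of_ne {k : Type*} [Field k] {a b : k[X]}
    (ha : a.Monic) (hb : b.Monic) (ha' : Irreducible a) (hb' : Irreducible b) (hab : a ≠ b) :
    IsCoprime a b :=
  ha'.coprime_iff_not_dvd.mpr fun h ↦
    hab (eq_of_monic_of_associated ha hb (ha'.associated_of_dvd hb' h))

theorem dedekind_kummer_general (f : ℤ[X])
    (p : ℕ) (hp : p.Prime) (r : ℕ) (g : Fin r → ℤ[X])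
    (hgmonic : ∀ i, (g i).Monic)
    (hgirr : ∀ i, Irreducible ((g i).map (Int.castRingHom (ZMod p))))
    (hgdist : ∀ i j, i ≠ j →
      (g i).map (Int.castRingHom (ZMod p)) ≠ (g j).map (Int.castRingHom (ZMod p)))
    (hfact : f.map (Int.castRingHom (ZMod p)) =
      ∏ i, (g i).map (Int.castRingHom (ZMod p))) :
    (∀ i, (Ideal.span {(p : AdjoinRoot f), AdjoinRoot.mk f (g i)}).IsPrime) ∧
    (∀ i j, i ≠ j →
      (Ideal.span {(p : AdjoinRoot f), AdjoinRoot.mk f (g i)} : Ideal (AdjoinRoot f)) ≠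
        Ideal.span {(p : AdjoinRoot f), AdjoinRoot.mk f (g j)}) ∧
    Ideal.span {(p : AdjoinRoot f)} =
      ∏ i, Ideal.span {(p : AdjoinRoot f), AdjoinRoot.mk f (g i)} := by
  have : Fact p.Prime := ⟨hp⟩
  set π := Int.castRingHom (ZMod p)
  set ρ := AdjoinRoot.map π f (f.map π) dvd_rfl
  have hρ : Surjective ρ := AdjoinRoot.map_surjective f ZMod.intCast_surjective dvd_rfl
  have hker : RingHom.ker ρ = Ideal.span {(p : AdjoinRoot f)} := by
    rw [AdjoinRoot.ker_map_self f ZMod.intCast_surjective, ZMod.ker_intCastRingHom,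
      Ideal.map_span, Set.image_singleton, map_natCast]
  have hspan i : Ideal.span {(p : AdjoinRoot f), AdjoinRoot.mk f (g i)} =
      Ideal.comap ρ (Ideal.span {AdjoinRoot.mk _ ((g i).map π)}) := by
    rw [Ideal.span_pair_eq_comap_span_singleton hρ hker, AdjoinRoot.map_mk]
  have hprime i : (Ideal.span {AdjoinRoot.mk (f.map π) ((g i).map π)}).IsPrime :=
    AdjoinRoot.isPrime_span_mk (hgirr i).prime <|
      hfact ▸ Finset.dvd_prod_of_mem _ (Finset.mem_univ i)
  have hcop : ((Finset.univ : Finset (Fin r)) : Set (Fin r)).Pairwise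
      (IsCoprime on fun i ↦ Ideal.span {AdjoinRoot.mk (f.map π) ((g i).map π)}) :=
    fun i _ j _ hij ↦ (Ideal.isCoprime_span_singleton_iff _ _).mpr <|
      (isCoprime_of_monic_of_irreducible_of_ne ((hgmonic i).map π) ((hgmonic j).map π)
        (hgirr i) (hgirr j) (hgdist i j hij)).map _
  simp only [hspan]
  refine ⟨fun i ↦ (hprime i).comap ρ, fun i j hij h ↦ ?_, ?_⟩
  · have := ((hcop (by simp) (by simp) hij).comap_of_surjective hρ).sup_eq
    rw [h, sup_idem] at this
    exact ((hprime j).comap ρ).ne_top this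
  · rw [Ideal.prod_comap_eq_ker_of_prod_eq_bot hρ hcop, hker]
    rw [Ideal.prod_span_singleton, ← map_prod, ← hfact, AdjoinRoot.mk_self,
      Ideal.span_singleton_eq_bot]

/-- Dedekind–Kummer in the monogenic, squarefree-reduction case.  Let `f` be a
monic irreducible integer polynomial such that `ℤ[α] = ℤ[x]/(f)` is the ring of
integers of `K = ℚ[x]/(f)` (encoded by `ℤ[α]` being integrally closed).  If
`f mod p` factors into pairwise distinct monic irreducible polynomials
`g̅_1, …, g̅_r` over `𝔽_p`, then `p𝒪_K = ∏ i, (p, g_i(α))` is the factorization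
of `p𝒪_K` into distinct prime ideals. -/
theorem dedekind_kummer (f : ℤ[X]) (hf : f.Monic) (hirr : Irreducible f)
    [IsIntegrallyClosed (AdjoinRoot f)]
    (p : ℕ) (hp : p.Prime) (r : ℕ) (g : Fin r → ℤ[X])
    (hgmonic : ∀ i, (g i).Monic)
    (hgirr : ∀ i, Irreducible ((g i).map (Int.castRingHom (ZMod p))))
    (hgdist : ∀ i j, i ≠ j →
      (g i).map (Int.castRingHom (ZMod p)) ≠ (g j).map (Int.castRingHom (ZMod p)))
    (hfact : f.map (Int.castRingHom (ZMod p)) =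
      ∏ i, (g i).map (Int.castRingHom (ZMod p))) :
    (∀ i, (Ideal.span {(p : AdjoinRoot f), AdjoinRoot.mk f (g i)}).IsPrime) ∧
    (∀ i j, i ≠ j →
      (Ideal.span {(p : AdjoinRoot f), AdjoinRoot.mk f (g i)} : Ideal (AdjoinRoot f)) ≠
        Ideal.span {(p : AdjoinRoot f), AdjoinRoot.mk f (g j)}) ∧
    Ideal.span {(p : AdjoinRoot f)} =
      ∏ i, Ideal.span {(p : AdjoinRoot f), AdjoinRoot.mk f (g i)} :=
  dedekind_kummer_general f p hp r g hgmonic hgirr hgdist hfact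
end

section
/- The class of the prime ideal 𝔭 = (2, α+1) in the class group of ℚ(√235) has order exactly 2; in particular 𝔭 is not principal but 𝔭^2 is principal. -/
/-!
Write `α` for the root. Since `α² = 235 = 4 · 58 + 3`, we have `(α + 1)² = 2 (α + 118)` and
`2 = (α + 1)² - 2 (α + 1) - 58 · 4`, so `𝔭² = (2)` is principal. If `𝔭 = (x)`, then `x²` and `2`
are associates, and mapping `ℤ[α]` to `ℤ√235` and taking norms gives an element `a + b√235` of norm
`a² - 235 b² = ±2`. This is impossible modulo `5`, where `±2` are not squares.
-/

open Polynomial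

theorem AdjoinRoot.root_X_pow_sub_C_pow {S : Type*} [CommRing S] (n : ℕ) (a : S) :
    root (X ^ n - C a) ^ n = of (X ^ n - C a) a := by
  rw [← sub_eq_zero, ← eval₂_root, eval₂_sub, eval₂_C, eval₂_pow, eval₂_X]

theorem Ideal.span_two_add_one_sq_eq_span_two {R : Type*} [CommRing R] {r : R} {k : ℤ}
    (hr : r ^ 2 = 4 * k + 3) : Ideal.span {2, r + 1} ^ 2 = Ideal.span {(2 : R)} := by
  rw [sq, Ideal.span_pair_mul_span_pair]
  apply le_antisymm
  · rw [Ideal.span_le]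
    simp only [Set.insert_subset_iff, Set.singleton_subset_iff, SetLike.mem_coe,
      Ideal.mem_span_singleton]
    refine ⟨dvd_mul_right _ _, dvd_mul_right _ _, dvd_mul_left _ _, ⟨r + 2 * k + 2, ?_⟩⟩
    linear_combination hr
  · have hmem : -k * (2 * 2) + -1 * (2 * (r + 1)) + (r + 1) * (r + 1) ∈
        Ideal.span {2 * 2, 2 * (r + 1), (r + 1) * 2, (r + 1) * (r + 1)} :=
      add_mem (add_mem (Ideal.mul_mem_left _ _ (Ideal.subset_span (by simp)))
        (Ideal.mul_mem_left _ _ (Ideal.subset_span (by simp)))) (Ideal.subset_span (by simp))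
    rw [Ideal.span_singleton_le_iff_mem]
    convert hmem using 1
    linear_combination -hr

namespace Zsqrtd

theorem natAbs_norm_ne_two_of_five_dvd {d : ℤ} (hd : 5 ∣ d) (z : ℤ√d) : z.norm.natAbs ≠ 2 := by
  obtain ⟨e, rfl⟩ := hd
  intro hnorm
  have h5 : (z.norm : ZMod 5) = 2 ∨ (z.norm : ZMod 5) = -2 := by
    rcases Int.natAbs_eq z.norm with h | h <;> rw [h, hnorm] <;> simp
  rw [norm_def] at h5
  push_cast at h5
  generalize (z.re : ZMod 5) = a at h5
  generalize (z.im : ZMod 5) = b at h5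
  generalize (e : ZMod 5) = c at h5
  revert a b c
  decide

theorem not_associated_sq_two {d : ℤ} (hd : 5 ∣ d) (z : ℤ√d) : ¬ Associated (z ^ 2) 2 := by
  intro h
  have h' : (norm (z ^ 2)).natAbs = (norm ((2 : ℤ) : ℤ√d)).natAbs :=
    Int.associated_iff_natAbs.mp (by exact_mod_cast h.map normMonoidHom)
  rw [pow_two, norm_mul, norm_intCast, Int.natAbs_mul, Int.natAbs_mul] at h'
  exact natAbs_norm_ne_two_of_five_dvd hd z (Nat.mul_self_inj.mp h')

noncomputable def ofAdjoinRoot (d : ℤ) : AdjoinRoot (X ^ 2 - C d) →+* ℤ√d :=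
  AdjoinRoot.lift (Int.castRingHom _) sqrtd <| by
    rw [eval₂_sub, eval₂_X_pow, eval₂_C, sq, dmuld, eq_intCast, sub_self]

end Zsqrtd

theorem Ideal.not_isPrincipal_of_sq_eq_span_two {R : Type*} [CommRing R] [IsDomain R] {d : ℤ}
    (hd : 5 ∣ d) (φ : R →+* ℤ√d) {I : Ideal R} (hI : I ^ 2 = Ideal.span {2}) :
    ¬ I.IsPrincipal := by
  rintro ⟨x, rfl⟩
  rw [Ideal.submodule_span_eq, Ideal.span_singleton_pow,
    Ideal.span_singleton_eq_span_singleton] at hI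
  exact Zsqrtd.not_associated_sq_two hd (φ x) (by simpa only [map_pow, map_ofNat] using hI.map φ)

theorem ClassGroup.orderOf_mk0_eq_two {R : Type*} [CommRing R] [IsDedekindDomain R]
    {I : Ideal R} (hI : I ∈ nonZeroDivisors (Ideal R)) (hI_np : ¬ I.IsPrincipal)
    (hI_sq : (I ^ 2).IsPrincipal) : orderOf (ClassGroup.mk0 ⟨I, hI⟩) = 2 := by
  refine orderOf_eq_prime ?_ (by rwa [Ne, ClassGroup.mk0_eq_one_iff])
  rwa [← map_pow, SubmonoidClass.mk_pow, ClassGroup.mk0_eq_one_iff]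

theorem order_two_class_sqrt235_general
    [IsDedekindDomain (AdjoinRoot (X ^ 2 - C (235 : ℤ)))]
    (h : (Ideal.span {2, AdjoinRoot.root (X ^ 2 - C (235 : ℤ)) + 1} :
        Ideal (AdjoinRoot (X ^ 2 - C (235 : ℤ)))) ∈
      nonZeroDivisors (Ideal (AdjoinRoot (X ^ 2 - C (235 : ℤ))))) :
    orderOf (ClassGroup.mk0 ⟨_, h⟩) = 2 ∧
    ¬ (Ideal.span {2, AdjoinRoot.root (X ^ 2 - C (235 : ℤ)) + 1} :
        Ideal (AdjoinRoot (X ^ 2 - C (235 : ℤ)))).IsPrincipal ∧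
    ((Ideal.span {2, AdjoinRoot.root (X ^ 2 - C (235 : ℤ)) + 1} :
        Ideal (AdjoinRoot (X ^ 2 - C (235 : ℤ)))) ^ 2).IsPrincipal := by
  have hsq : Ideal.span {2, AdjoinRoot.root (X ^ 2 - C (235 : ℤ)) + 1} ^ 2 =
      Ideal.span {2} := by
    refine Ideal.span_two_add_one_sq_eq_span_two (k := 58) ?_
    rw [AdjoinRoot.root_X_pow_sub_C_pow, eq_intCast]
    norm_num
  have hsq_principal :
      (Ideal.span {2, AdjoinRoot.root (X ^ 2 - C (235 : ℤ)) + 1} ^ 2).IsPrincipal :=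
    hsq ▸ ⟨2, rfl⟩
  have hnot_principal :=
    Ideal.not_isPrincipal_of_sq_eq_span_two (by norm_num) (Zsqrtd.ofAdjoinRoot 235) hsq
  exact ⟨ClassGroup.orderOf_mk0_eq_two h hnot_principal hsq_principal, hnot_principal,
    hsq_principal⟩

/-- The class of the prime ideal `𝔭 = (2, α + 1)` in the class group of
`ℚ(√235)` (with ring of integers `ℤ[α]`) has order exactly `2`; in particular
`𝔭` is not principal but `𝔭^2` is principal. -/
theorem order_two_class_sqrt235
    [IsDomain (AdjoinRoot (X ^ 2 - C (235 : ℤ)))]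
    [IsDedekindDomain (AdjoinRoot (X ^ 2 - C (235 : ℤ)))]
    (h : (Ideal.span {2, AdjoinRoot.root (X ^ 2 - C (235 : ℤ)) + 1} :
        Ideal (AdjoinRoot (X ^ 2 - C (235 : ℤ)))) ∈
      nonZeroDivisors (Ideal (AdjoinRoot (X ^ 2 - C (235 : ℤ))))) :
    orderOf (ClassGroup.mk0 ⟨_, h⟩) = 2 ∧
    ¬ (Ideal.span {2, AdjoinRoot.root (X ^ 2 - C (235 : ℤ)) + 1} :
        Ideal (AdjoinRoot (X ^ 2 - C (235 : ℤ)))).IsPrincipal ∧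
    ((Ideal.span {2, AdjoinRoot.root (X ^ 2 - C (235 : ℤ)) + 1} :
        Ideal (AdjoinRoot (X ^ 2 - C (235 : ℤ)))) ^ 2).IsPrincipal :=
  order_two_class_sqrt235_general h
end

section
/- The unit group of ℤ[√3] is {±(2 + √3)^n : n ∈ ℤ}; i.e., it is generated by -1 and 2 + √3. -/
/-!
A unit of `ℤ√3` has norm `±1`, and norm `-1` is impossible since `x² ≡ -1 (mod 3)` has no
solution. So the units are exactly the solutions of the Pell equation `x² - 3y² = 1`, which are
`±` the integer powers of a fundamental solution; `2 + √3` is fundamental because `2` is the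
least integer `x > 1`.
-/

namespace Zsqrtd

variable {d : ℤ}

theorem norm_eq_one_of_isUnit {n : ℕ} (hn : (n : ℤ) ∣ d) (hsq : ¬IsSquare (-1 : ZMod n))
    {z : ℤ√d} (hz : IsUnit z) : z.norm = 1 := by
  rcases Int.isUnit_iff.mp ((isUnit_iff_norm_isUnit z).mp hz) with hnorm | hnorm
  · exact hnorm
  · have hd : (d : ZMod n) = 0 := (ZMod.intCast_zmod_eq_zero_iff_dvd d n).mpr hn
    have hmod := congrArg (Int.cast : ℤ → ZMod n) hnorm
    rw [norm_def] at hmod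
    push_cast at hmod
    rw [hd, zero_mul, zero_mul, sub_zero] at hmod
    exact absurd ⟨(z.re : ZMod n), hmod.symm⟩ hsq

end Zsqrtd

namespace Pell

variable {d : ℤ}

theorem IsFundamental.of_x_eq_two {a : Solution₁ d} (hx : a.x = 2) (hy : 0 < a.y) :
    IsFundamental a :=
  ⟨by omega, hy, fun hb => by omega⟩

def Solution₁.toUnits : Solution₁ d →* (ℤ√d)ˣ :=
  Unitary.toUnits

theorem Solution₁.toUnits_neg (a : Solution₁ d) : toUnits (-a) = -toUnits a :=
  Units.ext rfl

theorem IsFundamental.units_eq_zpow_or_neg_zpow {a₁ : Solution₁ d} (h : IsFundamental a₁)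
    (hnorm : ∀ u : (ℤ√d)ˣ, (u : ℤ√d).norm = 1) (u : (ℤ√d)ˣ) :
    ∃ n : ℤ, u = Solution₁.toUnits a₁ ^ n ∨ u = -(Solution₁.toUnits a₁ ^ n) := by
  let a : Solution₁ d := ⟨u, Zsqrtd.norm_eq_one_iff_mem_unitary.mp (hnorm u)⟩
  have hu : u = Solution₁.toUnits a := Units.ext rfl
  obtain ⟨n, ha | ha⟩ := h.eq_zpow_or_neg_zpow a
  · exact ⟨n, Or.inl (by rw [hu, ha, map_zpow])⟩
  · exact ⟨n, Or.inr (by rw [hu, ha, Solution₁.toUnits_neg, map_zpow])⟩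

end Pell

/-- The unit group of `ℤ[√3]` is `{±(2+√3)^n : n ∈ ℤ}`: there is a unit with
underlying element `2 + √3`, and every unit is `±` an integer power of it. -/
theorem units_zsqrt3 :
    ∃ v : (ℤ√3)ˣ, (v : ℤ√3) = ⟨2, 1⟩ ∧
      ∀ u : (ℤ√3)ˣ, ∃ n : ℤ, u = v ^ n ∨ u = -(v ^ n) := by
  let a₁ : Pell.Solution₁ 3 := .mk 2 1 (by norm_num)
  have ha₁ : Pell.IsFundamental a₁ := .of_x_eq_two rfl one_pos
  have hsq : ¬IsSquare (-1 : ZMod 3) := by decide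
  exact ⟨Pell.Solution₁.toUnits a₁, rfl, ha₁.units_eq_zpow_or_neg_zpow
    fun u => Zsqrtd.norm_eq_one_of_isUnit (dvd_refl _) hsq u.isUnit⟩
end

section
/- The number field K = ℚ[x]/(x^4 - 13x^2 + 16) is Galois over ℚ with automorphism group isomorphic to C_2 × C_2. -/
/-!
If `α` is a root of `X⁴ + aX² + b²` with `b ≠ 0`, then so are `-α` and `±b/α`, since
`α² · (b/α)² = b²` and `α² + (b/α)² = -a`. Hence `K = ℚ(α)` contains all four roots of
`X⁴ - 13X² + 16 = X⁴ - 13X² + 4²`, so it is a splitting field and Galois with four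
automorphisms. Each of them sends `α` to one of `±α, ±4/α`, and each of these four
assignments is an involution, so the automorphism group has exponent two and is the
Klein four-group.
-/

open Polynomial

theorem IsKleinFour.of_card_eq_four_of_forall_sq_eq_one {G : Type*} [Group G]
    (hcard : Nat.card G = 4) (hsq : ∀ g : G, g ^ 2 = 1) : IsKleinFour G where
  card_four := hcard
  exponent_two := by
    have : Finite G := Nat.finite_of_card_ne_zero (by omega)
    have : Nontrivial G := Finite.one_lt_card_iff_nontrivial.mp (by omega)
    rcases (Nat.dvd_prime Nat.prime_two).mp (Monoid.exponent_dvd_of_forall_pow_eq_one hsq)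
      with hexp | hexp
    · exact absurd (Monoid.exp_eq_one_iff.mp hexp) (not_subsingleton G)
    · exact hexp

instance : IsKleinFour (Multiplicative (ZMod 2) × Multiplicative (ZMod 2)) where
  card_four := by simp
  exponent_two := by simp [Monoid.exponent_prod]

namespace AdjoinRoot

theorem algEquiv_ext {R : Type*} [CommRing R] {g : R[X]}
    {σ τ : AdjoinRoot g ≃ₐ[R] AdjoinRoot g} (h : σ (root g) = τ (root g)) : σ = τ :=
  AlgEquiv.coe_toAlgHom_injective (algHom_ext h)

variable {F : Type*} [Field F] {f : F[X]} [Fact (Irreducible f)]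

theorem isSplittingField_of_splits (hf : Splits (f.map (algebraMap F (AdjoinRoot f)))) :
    IsSplittingField F (AdjoinRoot f) f where
  splits' := hf
  adjoin_rootSet' := by
    rw [eq_top_iff, ← adjoinRoot_eq_top]
    refine Algebra.adjoin_mono (Set.singleton_subset_iff.mpr ?_)
    exact (mem_rootSet_of_ne (Fact.out : Irreducible f).ne_zero).mpr (eval₂_root f)

end AdjoinRoot

section BiquadraticQuartic

variable {F L : Type*} [Field F] [Field L] [Algebra F L] {a b : F} {α : L}

theorem ne_zero_of_aeval_biquadratic (hb : b ≠ 0)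
    (hα : aeval α (X ^ 4 + C a * X ^ 2 + C (b ^ 2) : F[X]) = 0) : α ≠ 0 := by
  rintro rfl
  simp [hb] at hα

theorem map_biquadratic_eq_prod (hb : b ≠ 0)
    (hα : aeval α (X ^ 4 + C a * X ^ 2 + C (b ^ 2) : F[X]) = 0) :
    (X ^ 4 + C a * X ^ 2 + C (b ^ 2) : F[X]).map (algebraMap F L) =
      (X - C α) * (X + C α) * (X - C (algebraMap F L b / α)) *
        (X + C (algebraMap F L b / α)) := by
  set β := algebraMap F L b
  have hα0 := ne_zero_of_aeval_biquadratic hb hα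
  simp only [map_add, map_pow, map_mul, aeval_X, aeval_C] at hα
  have hsum : α ^ 2 + (β / α) ^ 2 = -algebraMap F L a := by
    field_simp
    linear_combination hα
  calc (X ^ 4 + C a * X ^ 2 + C (b ^ 2) : F[X]).map (algebraMap F L)
      = X ^ 4 - C (α ^ 2 + (β / α) ^ 2) * X ^ 2 + C (α ^ 2 * (β / α) ^ 2) := by
        rw [hsum, show α ^ 2 * (β / α) ^ 2 = β ^ 2 by field_simp]
        simp [β, sub_eq_add_neg]
    _ = _ := by simp only [map_add, map_mul, map_pow]; ring

theorem splits_map_biquadratic (hb : b ≠ 0)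
    (hα : aeval α (X ^ 4 + C a * X ^ 2 + C (b ^ 2) : F[X]) = 0) :
    Splits ((X ^ 4 + C a * X ^ 2 + C (b ^ 2) : F[X]).map (algebraMap F L)) := by
  rw [map_biquadratic_eq_prod hb hα]
  simp only [← sub_neg_eq_add, ← map_neg]
  exact (((Splits.X_sub_C _).mul (Splits.X_sub_C _)).mul (Splits.X_sub_C _)).mul
    (Splits.X_sub_C _)

theorem algEquiv_apply_apply_eq_of_biquadratic (hb : b ≠ 0)
    (hα : aeval α (X ^ 4 + C a * X ^ 2 + C (b ^ 2) : F[X]) = 0) (σ : L ≃ₐ[F] L) :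
    σ (σ α) = α := by
  have hσα :
      ((X ^ 4 + C a * X ^ 2 + C (b ^ 2) : F[X]).map (algebraMap F L)).eval (σ α) = 0 := by
    rw [eval_map_algebraMap, aeval_algEquiv, AlgHom.comp_apply, hα, map_zero]
  have hα0 := ne_zero_of_aeval_biquadratic hb hα
  have hβ : algebraMap F L b ≠ 0 := (_root_.map_ne_zero _).mpr hb
  have hσb : σ (algebraMap F L b) = algebraMap F L b := σ.commutes b
  rw [map_biquadratic_eq_prod hb hα] at hσα
  simp only [eval_mul, eval_sub, eval_add, eval_X, eval_C, mul_eq_zero, sub_eq_zero,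
    add_eq_zero_iff_eq_neg] at hσα
  rcases hσα with ((hσ | hσ) | hσ) | hσ
  · rw [hσ, hσ]
  · rw [hσ, map_neg, hσ, neg_neg]
  · rw [hσ, map_div₀, hσb, hσ]
    field_simp
  · rw [hσ, map_neg, map_div₀, hσb, hσ]
    field_simp

end BiquadraticQuartic

/-- The number field `K = ℚ[x]/(x⁴ - 13x² + 16)` is Galois over `ℚ` with
automorphism group isomorphic to `C₂ × C₂`. -/
theorem galois_biquadratic_quartic
    [Fact (Irreducible (X ^ 4 - 13 * X ^ 2 + 16 : ℚ[X]))] :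
    IsGalois ℚ (AdjoinRoot (X ^ 4 - 13 * X ^ 2 + 16 : ℚ[X])) ∧
    Nonempty ((AdjoinRoot (X ^ 4 - 13 * X ^ 2 + 16 : ℚ[X]) ≃ₐ[ℚ]
        AdjoinRoot (X ^ 4 - 13 * X ^ 2 + 16 : ℚ[X])) ≃*
      (Multiplicative (ZMod 2) × Multiplicative (ZMod 2))) := by
  set f : ℚ[X] := X ^ 4 - 13 * X ^ 2 + 16
  have hf : f = X ^ 4 + C (-13) * X ^ 2 + C (4 ^ 2) := by
    simp only [f, map_neg, map_pow, map_ofNat]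
    ring
  have hroot : aeval (AdjoinRoot.root f) (X ^ 4 + C (-13) * X ^ 2 + C (4 ^ 2) : ℚ[X]) = 0 :=
    (congrArg _ hf).symm.trans (AdjoinRoot.aeval_algHom_eq_zero f (AlgHom.id ℚ _))
  have : IsSplittingField ℚ (AdjoinRoot f) f := AdjoinRoot.isSplittingField_of_splits <|
    (congrArg (fun p ↦ Splits (p.map (algebraMap ℚ (AdjoinRoot f)))) hf).mpr
      (splits_map_biquadratic four_ne_zero hroot)
  have : IsGalois ℚ (AdjoinRoot f) :=
    IsGalois.of_separable_splitting_field (Fact.out : Irreducible f).separable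
  have hcard : Nat.card (AdjoinRoot f ≃ₐ[ℚ] AdjoinRoot f) = 4 := by
    rw [IsGalois.card_aut_eq_finrank]
    exact finrank_quotient_span_eq_natDegree.trans (by simp only [f]; compute_degree!)
  have : IsKleinFour (AdjoinRoot f ≃ₐ[ℚ] AdjoinRoot f) :=
    .of_card_eq_four_of_forall_sq_eq_one hcard fun σ ↦ AdjoinRoot.algEquiv_ext <|
      algEquiv_apply_apply_eq_of_biquadratic four_ne_zero hroot σ
  exact ⟨‹_›, IsKleinFour.nonempty_mulEquiv⟩
end
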